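/- Suppose f : ℝ^d → ℝ is differentiable and its gradient satisfies the symmetric (L₀, L₁)-Lipschitz condition with respect to a norm ‖·‖ and dual norm ‖·‖₊: for all x, y, ‖∇f(x) − ∇f(y)‖₊ ≤ (L₀ + L₁ sup_{θ∈[0,1]} ‖∇f(θx + (1−θ)y)‖₊) ‖x−y‖. Then for all x, y: ‖∇f(x) − ∇f(y)‖₊ ≤ (L₀ + L₁‖∇f(y)‖₊) exp(L₁‖x−y‖) ‖x−y‖. -/

import Mathlib

/-- The dual norm of an arbitrary norm `N` on `ℝ^d`:
`‖u‖₊ = sup_{N v ≤ 1} ⟨u, v⟩`. -/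
noncomputable def dualNorm {d : ℕ} (N : EuclideanSpace ℝ (Fin d) → ℝ)
    (u : EuclideanSpace ℝ (Fin d)) : ℝ :=
  sSup ((fun v => (inner ℝ u v : ℝ)) '' {v | N v ≤ 1})

section Aux

variable {d : ℕ} {N : EuclideanSpace ℝ (Fin d) → ℝ}

lemma dualNorm_zero' (hN_smul : ∀ (c : ℝ) x, N (c • x) = |c| * N x) : dualNorm N 0 = 0 := by
  unfold dualNorm
  have hne : ({v | N v ≤ 1} : Set (EuclideanSpace ℝ (Fin d))).Nonempty :=
    ⟨0, by simp [show N 0 = 0 from by simpa using hN_smul 0 0]⟩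
  have himg : (fun v => (inner ℝ (0 : EuclideanSpace ℝ (Fin d)) v : ℝ)) '' {v | N v ≤ 1} = {0} := by
    apply Set.Subset.antisymm
    · rintro _ ⟨v, _, rfl⟩; simp
    · rintro z (rfl : z = 0)
      exact ⟨hne.choose, hne.choose_spec, by simp⟩
  rw [himg]
  exact csSup_singleton 0

lemma abs_apply_le' (v : EuclideanSpace ℝ (Fin d)) (i : Fin d) : |v i| ≤ ‖v‖ := by
  rw [EuclideanSpace.norm_eq]
  have h1 : |v i| = Real.sqrt (|v i|^2) := by
    rw [Real.sqrt_sq_eq_abs, abs_abs]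
  rw [h1]
  apply Real.sqrt_le_sqrt
  have : (|v i|)^2 = ‖v i‖^2 := by simp [sq_abs, Real.norm_eq_abs]
  rw [this]
  exact Finset.single_le_sum (f := fun j => ‖v j‖^2) (fun j _ => sq_nonneg _) (Finset.mem_univ i)

lemma N_sum_le' (hN_add : ∀ x y, N (x + y) ≤ N x + N y)
    (hN_smul : ∀ (c : ℝ) x, N (c • x) = |c| * N x)
    {ι : Type*} (s : Finset ι) (F : ι → EuclideanSpace ℝ (Fin d)) :
    N (∑ i ∈ s, F i) ≤ ∑ i ∈ s, N (F i) := by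
  classical
  induction s using Finset.cons_induction with
  | empty => simp [show N 0 = 0 from by simpa using hN_smul 0 0]
  | cons a s ha ih =>
      rw [Finset.sum_cons, Finset.sum_cons]
      exact (hN_add _ _).trans (by linarith)

lemma N_nonneg' (hN_add : ∀ x y, N (x + y) ≤ N x + N y)
    (hN_smul : ∀ (c : ℝ) x, N (c • x) = |c| * N x) (v : EuclideanSpace ℝ (Fin d)) :
    0 ≤ N v := by
  have h := hN_add v (-v)
  have h2 : N (-v) = N v := by have := hN_smul (-1) v; simpa using this
  have h0 : N 0 = 0 := by simpa using hN_smul 0 0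
  simp only [add_neg_cancel, h0, h2] at h
  linarith

lemma N_upper' (hN_add : ∀ x y, N (x + y) ≤ N x + N y)
    (hN_smul : ∀ (c : ℝ) x, N (c • x) = |c| * N x) :
    ∃ C : ℝ, 0 ≤ C ∧ ∀ v, N v ≤ C * ‖v‖ := by
  refine ⟨∑ i, N (EuclideanSpace.single i (1:ℝ)),
    Finset.sum_nonneg fun i _ => N_nonneg' hN_add hN_smul _, fun v => ?_⟩
  have hv : v = ∑ i, v i • EuclideanSpace.single i (1:ℝ) := by
    ext j
    rw [show ((∑ i, v i • EuclideanSpace.single i (1:ℝ)) j)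
        = ∑ i, (v i • EuclideanSpace.single i (1:ℝ)) j from by
      rw [WithLp.ofLp_sum]; exact Finset.sum_apply j Finset.univ _]
    simp [EuclideanSpace.single_apply]
  calc N v ≤ ∑ i, N (v i • EuclideanSpace.single i (1:ℝ)) := by
        conv_lhs => rw [hv]
        exact N_sum_le' hN_add hN_smul _ _
    _ ≤ ∑ i, ‖v‖ * N (EuclideanSpace.single i (1:ℝ)) := by
        apply Finset.sum_le_sum
        intro i _
        rw [hN_smul]
        exact mul_le_mul_of_nonneg_right (abs_apply_le' v i) (N_nonneg' hN_add hN_smul _)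
    _ = (∑ i, N (EuclideanSpace.single i (1:ℝ))) * ‖v‖ := by
        rw [Finset.sum_mul]
        exact Finset.sum_congr rfl fun i _ => mul_comm _ _

lemma N_continuous' (hN_add : ∀ x y, N (x + y) ≤ N x + N y)
    (hN_smul : ∀ (c : ℝ) x, N (c • x) = |c| * N x) : Continuous N := by
  obtain ⟨C, hC0, hC⟩ := N_upper' hN_add hN_smul
  have hneg : ∀ w, N (-w) = N w := fun w => by have := hN_smul (-1) w; simpa using this
  rw [Metric.continuous_iff]
  intro b ε hε
  refine ⟨ε / (C + 1), by positivity, fun a hab => ?_⟩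
  have h1 : N a ≤ N b + N (a - b) := by
    have := hN_add b (a - b); simpa using this
  have h2 : N b ≤ N a + N (a - b) := by
    have h := hN_add a (b - a)
    have hr : N (b - a) = N (a - b) := by rw [← hneg (a - b)]; congr 1; abel
    simp only [add_sub_cancel] at h
    linarith [hr ▸ h]
  have h3 : N (a - b) ≤ C * ‖a - b‖ := hC _
  have h4 : ‖a - b‖ < ε / (C + 1) := by rwa [← dist_eq_norm]
  have h5 : C * ‖a - b‖ < ε := by
    calc C * ‖a-b‖ ≤ (C+1) * ‖a-b‖ := by nlinarith [norm_nonneg (a-b)]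
      _ < (C+1) * (ε/(C+1)) := by apply mul_lt_mul_of_pos_left h4; linarith
      _ = ε := by field_simp
  rw [Real.dist_eq, abs_lt]
  constructor <;> linarith

lemma N_lower' (hN_add : ∀ x y, N (x + y) ≤ N x + N y)
    (hN_smul : ∀ (c : ℝ) x, N (c • x) = |c| * N x)
    (hN_pos : ∀ x, x ≠ 0 → 0 < N x)
    {w : EuclideanSpace ℝ (Fin d)} (hw : w ≠ 0) :
    ∃ c : ℝ, 0 < c ∧ ∀ v, c * ‖v‖ ≤ N v := by
  have hsphere : (Metric.sphere (0 : EuclideanSpace ℝ (Fin d)) 1).Nonempty :=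
    ⟨‖w‖⁻¹ • w, by simp [norm_smul, norm_ne_zero_iff.2 hw, inv_mul_cancel₀]⟩
  obtain ⟨m, hm, hmin⟩ := (isCompact_sphere (0 : EuclideanSpace ℝ (Fin d)) 1).exists_isMinOn
    hsphere ((N_continuous' hN_add hN_smul).continuousOn)
  have hm1 : ‖m‖ = 1 := by simpa using hm
  have hmne : m ≠ 0 := by intro h; rw [h] at hm1; simp at hm1
  refine ⟨N m, hN_pos m hmne, fun v => ?_⟩
  rcases eq_or_ne v 0 with rfl | hv
  · simp [show N 0 = 0 from by simpa using hN_smul 0 0]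
  · have hu : ‖v‖⁻¹ • v ∈ Metric.sphere (0 : EuclideanSpace ℝ (Fin d)) 1 := by
      simp [norm_smul, norm_ne_zero_iff.2 hv, inv_mul_cancel₀]
    have hmv : N m ≤ N (‖v‖⁻¹ • v) := hmin hu
    have heq : N (‖v‖⁻¹ • v) = ‖v‖⁻¹ * N v := by
      rw [hN_smul]; congr 1; rw [abs_of_nonneg (by positivity)]
    rw [heq] at hmv
    have hvpos : 0 < ‖v‖ := norm_pos_iff.2 hv
    calc N m * ‖v‖ ≤ (‖v‖⁻¹ * N v) * ‖v‖ := mul_le_mul_of_nonneg_right hmv hvpos.le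
      _ = N v := by field_simp

lemma K_nonempty' (hN_smul : ∀ (c : ℝ) x, N (c • x) = |c| * N x) :
    ({v | N v ≤ 1} : Set (EuclideanSpace ℝ (Fin d))).Nonempty :=
  ⟨0, by simp [show N 0 = 0 from by simpa using hN_smul 0 0]⟩

lemma dn_bddAbove' {c : ℝ} (hc : 0 < c) (hlow : ∀ v, c * ‖v‖ ≤ N v)
    (u : EuclideanSpace ℝ (Fin d)) :
    BddAbove ((fun v => (inner ℝ u v : ℝ)) '' {v | N v ≤ 1}) := by
  refine ⟨‖u‖ * c⁻¹, ?_⟩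
  rintro _ ⟨v, hv, rfl⟩
  have h1 : ‖v‖ ≤ c⁻¹ := by
    rw [← one_div, le_div_iff₀ hc]
    have := (hlow v).trans hv
    linarith
  calc (inner ℝ u v : ℝ) ≤ ‖u‖ * ‖v‖ := real_inner_le_norm u v
    _ ≤ ‖u‖ * c⁻¹ := mul_le_mul_of_nonneg_left h1 (norm_nonneg u)

lemma dn_nonneg' (hN_smul : ∀ (c : ℝ) x, N (c • x) = |c| * N x)
    {c : ℝ} (hc : 0 < c) (hlow : ∀ v, c * ‖v‖ ≤ N v)
    (u : EuclideanSpace ℝ (Fin d)) : 0 ≤ dualNorm N u := by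
  have h0 : (0:ℝ) ∈ (fun v => (inner ℝ u v : ℝ)) '' {v | N v ≤ 1} :=
    ⟨0, by simp [show N 0 = 0 from by simpa using hN_smul 0 0], by simp⟩
  exact le_csSup (dn_bddAbove' hc hlow u) h0

lemma dn_add' (hN_smul : ∀ (c : ℝ) x, N (c • x) = |c| * N x)
    {c : ℝ} (hc : 0 < c) (hlow : ∀ v, c * ‖v‖ ≤ N v)
    (u w : EuclideanSpace ℝ (Fin d)) :
    dualNorm N (u + w) ≤ dualNorm N u + dualNorm N w := by
  apply csSup_le ((K_nonempty' hN_smul).image _)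
  rintro _ ⟨v, hv, rfl⟩
  have h1 : (inner ℝ u v : ℝ) ≤ dualNorm N u := le_csSup (dn_bddAbove' hc hlow u) ⟨v, hv, rfl⟩
  have h2 : (inner ℝ w v : ℝ) ≤ dualNorm N w := le_csSup (dn_bddAbove' hc hlow w) ⟨v, hv, rfl⟩
  calc (inner ℝ (u+w) v : ℝ) = (inner ℝ u v : ℝ) + (inner ℝ w v : ℝ) := inner_add_left u w v
    _ ≤ _ := add_le_add h1 h2

lemma dn_sub_le' (hN_smul : ∀ (c : ℝ) x, N (c • x) = |c| * N x)
    {c : ℝ} (hc : 0 < c) (hlow : ∀ v, c * ‖v‖ ≤ N v)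
    (a b : EuclideanSpace ℝ (Fin d)) :
    dualNorm N a ≤ dualNorm N (a - b) + dualNorm N b := by
  have := dn_add' hN_smul hc hlow (a - b) b
  simpa using this

lemma dn_sum' (hN_smul : ∀ (c : ℝ) x, N (c • x) = |c| * N x)
    {c : ℝ} (hc : 0 < c) (hlow : ∀ v, c * ‖v‖ ≤ N v)
    (n : ℕ) (F : ℕ → EuclideanSpace ℝ (Fin d)) :
    dualNorm N (∑ k ∈ Finset.range n, F k) ≤ ∑ k ∈ Finset.range n, dualNorm N (F k) := by
  induction n with
  | zero => simp [dualNorm_zero' hN_smul]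
  | succ n ih =>
    rw [Finset.sum_range_succ, Finset.sum_range_succ]
    exact (dn_add' hN_smul hc hlow _ _).trans (by linarith)

end Aux

set_option maxHeartbeats 1600000 in
/-- If the gradient of `f` is symmetrically `(L₀,L₁)`-Lipschitz continuous with respect
to the norm `N` (and its dual norm), then
`‖∇f(x) − ∇f(y)‖₊ ≤ (L₀ + L₁‖∇f(y)‖₊) exp(L₁‖x−y‖) ‖x−y‖`. -/
theorem stmt_4 {d : ℕ} (f : EuclideanSpace ℝ (Fin d) → ℝ) (hf : Differentiable ℝ f)
    (N : EuclideanSpace ℝ (Fin d) → ℝ)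
    (hN_add : ∀ x y, N (x + y) ≤ N x + N y)
    (hN_smul : ∀ (c : ℝ) x, N (c • x) = |c| * N x)
    (hN_pos : ∀ x, x ≠ 0 → 0 < N x)
    (L₀ L₁ : ℝ) (hL₀ : 0 ≤ L₀) (hL₁ : 0 ≤ L₁)
    (hsmooth : ∀ x y,
      dualNorm N (gradient f x - gradient f y) ≤
        (L₀ + L₁ * sSup ((fun θ : ℝ => dualNorm N (gradient f (θ • x + (1 - θ) • y))) ''
          Set.Icc 0 1)) * N (x - y)) :
    ∀ x y,
      dualNorm N (gradient f x - gradient f y) ≤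
        (L₀ + L₁ * dualNorm N (gradient f y)) * Real.exp (L₁ * N (x - y)) * N (x - y) := by
  intro x y
  by_cases hxy : x = y
  · subst hxy
    rw [sub_self, sub_self, dualNorm_zero' hN_smul,
      show N 0 = 0 from by simpa using hN_smul 0 0, mul_zero]
  -- main case
  obtain ⟨c, hc, hlow⟩ := N_lower' hN_add hN_smul hN_pos (sub_ne_zero.2 hxy)
  set r := N (x - y) with hr_def
  have hr : 0 < r := hN_pos _ (sub_ne_zero.2 hxy)
  set z : ℝ → EuclideanSpace ℝ (Fin d) := fun t => t • x + (1 - t) • y with hz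
  set g : ℝ → ℝ := fun t => dualNorm N (gradient f (z t)) with hg
  have hg0 : ∀ t, 0 ≤ g t := fun t => dn_nonneg' hN_smul hc hlow _
  have hNz : ∀ s t : ℝ, s ≤ t → N (z t - z s) = (t - s) * r := by
    intro s t h
    have hsub : z t - z s = (t - s) • (x - y) := by
      simp only [hz]; module
    rw [hr_def, hsub, hN_smul, abs_of_nonneg (by linarith : (0:ℝ) ≤ t - s)]
  have KF : ∀ s t : ℝ, s ≤ t →
      dualNorm N (gradient f (z t) - gradient f (z s)) ≤
        (L₀ + L₁ * sSup (g '' Set.Icc s t)) * ((t - s) * r) := by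
    intro s t h
    rcases eq_or_lt_of_le h with rfl | hlt
    · simp [dualNorm_zero' hN_smul]
    · have h0 := hsmooth (z t) (z s)
      have himg : (fun θ : ℝ => dualNorm N (gradient f (θ • z t + (1 - θ) • z s))) ''
          Set.Icc 0 1 = g '' Set.Icc s t := by
        have hpt : ∀ θ : ℝ, θ • z t + (1 - θ) • z s = z (s + θ * (t - s)) := by
          intro θ; simp only [hz]; module
        calc (fun θ : ℝ => dualNorm N (gradient f (θ • z t + (1 - θ) • z s))) '' Set.Icc 0 1
            = (fun θ : ℝ => g (s + θ * (t - s))) '' Set.Icc 0 1 := by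
              apply Set.image_congr
              intro θ _
              rw [hpt θ]
          _ = g '' Set.Icc s t := by
              rw [show (fun θ : ℝ => g (s + θ * (t - s)))
                  = g ∘ (fun θ : ℝ => (t - s) * θ + s) from
                funext fun θ => by simp only [Function.comp_apply]; ring_nf]
              rw [Set.image_comp, Set.image_affine_Icc' (by linarith : (0:ℝ) < t - s)]
              norm_num
      rw [himg, hNz s t h] at h0
      exact h0
  have PW : ∀ s w : ℝ, s ≤ w →
      g w ≤ g s + (L₀ + L₁ * sSup (g '' Set.Icc s w)) * ((w - s) * r) := by
    intro s w h
    have h1 := dn_sub_le' hN_smul hc hlow (gradient f (z w)) (gradient f (z s))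
    have h2 := KF s w h
    simp only [hg]
    linarith
  have FP : ∀ s t : ℝ, s < t → BddAbove (g '' Set.Icc s t) →
      sSup (g '' Set.Icc s t) * (1 - L₁ * ((t - s) * r)) ≤ g s + L₀ * ((t - s) * r) := by
    intro s t hst hbdd
    have hne : (g '' Set.Icc s t).Nonempty := ⟨g s, s, Set.left_mem_Icc.2 hst.le, rfl⟩
    have hgsS : g s ≤ sSup (g '' Set.Icc s t) :=
      le_csSup hbdd ⟨s, Set.left_mem_Icc.2 hst.le, rfl⟩
    have hmain : ∀ w ∈ Set.Icc s t,
        g w ≤ g s + (L₀ + L₁ * sSup (g '' Set.Icc s t)) * ((t - s) * r) := by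
      rintro w ⟨hsw, hwt⟩
      have h1 := PW s w hsw
      have hsubbdd : BddAbove (g '' Set.Icc s w) :=
        hbdd.mono (Set.image_mono (Set.Icc_subset_Icc_right hwt))
      have hsub_ne : (g '' Set.Icc s w).Nonempty := ⟨g s, s, Set.left_mem_Icc.2 hsw, rfl⟩
      have hSle : sSup (g '' Set.Icc s w) ≤ sSup (g '' Set.Icc s t) :=
        csSup_le_csSup hbdd hsub_ne (Set.image_mono (Set.Icc_subset_Icc_right hwt))
      have hSw_ge : g s ≤ sSup (g '' Set.Icc s w) :=
        le_csSup hsubbdd ⟨s, Set.left_mem_Icc.2 hsw, rfl⟩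
      have hws_le : (w - s) * r ≤ (t - s) * r := by nlinarith
      have A : (L₀ + L₁ * sSup (g '' Set.Icc s w)) * ((w - s) * r)
          ≤ (L₀ + L₁ * sSup (g '' Set.Icc s t)) * ((w - s) * r) := by
        apply mul_le_mul_of_nonneg_right (by nlinarith) (by nlinarith)
      have B : (L₀ + L₁ * sSup (g '' Set.Icc s t)) * ((w - s) * r)
          ≤ (L₀ + L₁ * sSup (g '' Set.Icc s t)) * ((t - s) * r) := by
        apply mul_le_mul_of_nonneg_left hws_le (by nlinarith [hg0 s])
      linarith
    have hS_le : sSup (g '' Set.Icc s t)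
        ≤ g s + (L₀ + L₁ * sSup (g '' Set.Icc s t)) * ((t - s) * r) := by
      apply csSup_le hne
      rintro _ ⟨w, hw, rfl⟩
      exact hmain w hw
    nlinarith [hS_le]
  have BDD : ∀ s t : ℝ, s < t → L₁ * ((t - s) * r) ≤ 1/2 → BddAbove (g '' Set.Icc s t) := by
    intro s t hst hsmall
    refine ⟨2 * (g s + L₀ * ((t - s) * r)), ?_⟩
    rintro _ ⟨w, ⟨hsw, hwt⟩, rfl⟩
    have hqle : (w - s) * r ≤ (t - s) * r := by nlinarith
    have hq0 : 0 ≤ (w - s) * r := by nlinarith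
    by_cases hb : BddAbove (g '' Set.Icc s w)
    · rcases eq_or_lt_of_le hsw with rfl | hsw'
      · nlinarith [hg0 s, hr]
      · have hFP := FP s w hsw' hb
        have hgw_le : g w ≤ sSup (g '' Set.Icc s w) :=
          le_csSup hb ⟨w, Set.right_mem_Icc.2 hsw, rfl⟩
        have hgs_le : g s ≤ sSup (g '' Set.Icc s w) :=
          le_csSup hb ⟨s, Set.left_mem_Icc.2 hsw, rfl⟩
        have hsmall' : L₁ * ((w - s) * r) ≤ 1/2 := by nlinarith
        have hS0 : 0 ≤ sSup (g '' Set.Icc s w) := (hg0 s).trans hgs_le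
        have hu0 : 0 ≤ L₁ * ((w - s) * r) := by positivity
        nlinarith [hFP, mul_le_mul_of_nonneg_left hsmall' hS0]
    · have h1 := PW s w hsw
      rw [Real.sSup_of_not_bddAbove hb] at h1
      nlinarith [hg0 s]
  -- per-step estimates for the subdivision
  have hz1 : z 1 = x := by simp [hz]
  have hz0 : z 0 = y := by simp [hz]
  have MAIN : ∀ n : ℕ, 1 ≤ n → L₁ * r / n ≤ 1/2 →
      dualNorm N (gradient f (z 1) - gradient f (z 0)) ≤
        (L₀ + L₁ * g 0) * r * ((1 - L₁ * r / n)⁻¹)^n := by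
    intro n hn1 hsmall
    have hnpos : (0:ℝ) < n := by exact_mod_cast hn1
    have hnne : (n:ℝ) ≠ 0 := ne_of_gt hnpos
    set q : ℝ := (1 - L₁ * r / n)⁻¹ with hq_def
    have hu0 : 0 ≤ L₁ * r / n := by positivity
    have hqpos : 0 < 1 - L₁ * r / n := by linarith
    have hq_pos : 0 < q := inv_pos.2 hqpos
    have hq1 : 1 ≤ q := by
      rw [hq_def, le_inv_comm₀ one_pos hqpos]
      linarith
    have step : ∀ k : ℕ, k < n →
        dualNorm N (gradient f (z (((k:ℝ)+1)/n)) - gradient f (z ((k:ℝ)/n))) ≤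
          (L₀ + L₁ * g ((k:ℝ)/n)) * q * ((1/n) * r) ∧
        L₀ + L₁ * g (((k:ℝ)+1)/n) ≤ (L₀ + L₁ * g ((k:ℝ)/n)) * q := by
      intro k hk
      set s : ℝ := (k:ℝ)/n with hs_def
      set t : ℝ := ((k:ℝ)+1)/n with ht_def
      have hts : t - s = 1/n := by
        rw [ht_def, hs_def, div_sub_div_same]
        ring_nf
      have hst : s < t := by
        rw [← sub_pos, hts]
        positivity
      have hueq : L₁ * ((t - s) * r) = L₁ * r / n := by rw [hts]; ring
      have hbdd := BDD s t hst (by rw [hueq]; exact hsmall)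
      have hFP := FP s t hst hbdd
      rw [hueq, hts] at hFP
      have hgsS : g s ≤ sSup (g '' Set.Icc s t) :=
        le_csSup hbdd ⟨s, Set.left_mem_Icc.2 hst.le, rfl⟩
      have hgtS : g t ≤ sSup (g '' Set.Icc s t) :=
        le_csSup hbdd ⟨t, Set.right_mem_Icc.2 hst.le, rfl⟩
      have hS0 : 0 ≤ sSup (g '' Set.Icc s t) := (hg0 s).trans hgsS
      have key1 : L₀ + L₁ * sSup (g '' Set.Icc s t) ≤ (L₀ + L₁ * g s) * q := by
        rw [hq_def, ← div_eq_mul_inv, le_div_iff₀ hqpos]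
        have hmul := mul_le_mul_of_nonneg_left hFP hL₁
        ring_nf at hmul ⊢
        nlinarith [hmul]
      have hak : dualNorm N (gradient f (z t) - gradient f (z s)) ≤
          (L₀ + L₁ * g s) * q * ((1/n) * r) := by
        have h1 := KF s t hst.le
        rw [hts] at h1
        calc dualNorm N (gradient f (z t) - gradient f (z s))
            ≤ (L₀ + L₁ * sSup (g '' Set.Icc s t)) * ((1/n) * r) := h1
          _ ≤ (L₀ + L₁ * g s) * q * ((1/n) * r) := by
              apply mul_le_mul_of_nonneg_right key1 (by positivity)
      have hbk : L₀ + L₁ * g t ≤ (L₀ + L₁ * g s) * q := by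
        have : L₀ + L₁ * g t ≤ L₀ + L₁ * sSup (g '' Set.Icc s t) := by nlinarith
        linarith [key1]
      exact ⟨hak, hbk⟩
    have hind : ∀ k : ℕ, k ≤ n → L₀ + L₁ * g ((k:ℝ)/n) ≤ (L₀ + L₁ * g 0) * q^k := by
      intro k
      induction k with
      | zero => intro _; simp
      | succ k ih =>
        intro hk1
        have hk : k < n := hk1
        have h1 := (step k hk).2
        have h2 := ih (le_of_lt hk)
        have hcast : ((k+1:ℕ):ℝ)/n = ((k:ℝ)+1)/n := by push_cast; ring
        rw [hcast]
        calc L₀ + L₁ * g (((k:ℝ)+1)/n) ≤ (L₀ + L₁ * g ((k:ℝ)/n)) * q := h1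
          _ ≤ ((L₀ + L₁ * g 0) * q^k) * q := mul_le_mul_of_nonneg_right h2 hq_pos.le
          _ = (L₀ + L₁ * g 0) * q^(k+1) := by ring
    have htele : gradient f (z 1) - gradient f (z 0)
        = ∑ k ∈ Finset.range n,
            (gradient f (z (((k:ℝ)+1)/n)) - gradient f (z ((k:ℝ)/n))) := by
      have hcast : ∀ k : ℕ, gradient f (z (((k:ℝ)+1)/n)) = gradient f (z (((k+1:ℕ):ℝ)/n)) := by
        intro k; congr 2; push_cast; ring
      rw [Finset.sum_congr rfl fun k _ => by rw [hcast k]]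
      rw [Finset.sum_range_sub (f := fun k : ℕ => gradient f (z ((k:ℝ)/n)))]
      rw [show ((n:ℝ))/n = 1 from div_self hnne, show ((0:ℕ):ℝ)/n = 0 from by simp]
    have hg00 : 0 ≤ L₀ + L₁ * g 0 := by nlinarith [hg0 0]
    calc dualNorm N (gradient f (z 1) - gradient f (z 0))
        = dualNorm N (∑ k ∈ Finset.range n,
            (gradient f (z (((k:ℝ)+1)/n)) - gradient f (z ((k:ℝ)/n)))) := by rw [htele]
      _ ≤ ∑ k ∈ Finset.range n,
            dualNorm N (gradient f (z (((k:ℝ)+1)/n)) - gradient f (z ((k:ℝ)/n))) :=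
          dn_sum' hN_smul hc hlow n _
      _ ≤ ∑ _k ∈ Finset.range n, (L₀ + L₁ * g 0) * q^n * ((1/n) * r) := by
          apply Finset.sum_le_sum
          intro k hk
          have hkn := Finset.mem_range.1 hk
          have h1 := (step k hkn).1
          have h2 := hind k (le_of_lt hkn)
          have h3 : (L₀ + L₁ * g ((k:ℝ)/n)) * q ≤ (L₀ + L₁ * g 0) * q^(k+1) := by
            calc (L₀ + L₁ * g ((k:ℝ)/n)) * q ≤ ((L₀ + L₁ * g 0) * q^k) * q :=
                mul_le_mul_of_nonneg_right h2 hq_pos.le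
              _ = (L₀ + L₁ * g 0) * q^(k+1) := by ring
          have h4 : (L₀ + L₁ * g 0) * q^(k+1) ≤ (L₀ + L₁ * g 0) * q^n := by
            apply mul_le_mul_of_nonneg_left _ hg00
            exact pow_le_pow_right₀ hq1 hkn
          calc dualNorm N (gradient f (z (((k:ℝ)+1)/n)) - gradient f (z ((k:ℝ)/n)))
              ≤ (L₀ + L₁ * g ((k:ℝ)/n)) * q * ((1/n) * r) := h1
            _ ≤ (L₀ + L₁ * g 0) * q^n * ((1/n) * r) := by
                apply mul_le_mul_of_nonneg_right (h3.trans h4) (by positivity)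
      _ = n * ((L₀ + L₁ * g 0) * q^n * ((1/n) * r)) := by
          rw [Finset.sum_const, Finset.card_range, nsmul_eq_mul]
      _ = (L₀ + L₁ * g 0) * r * q^n := by field_simp
  -- take the limit n → ∞
  have hlim : Filter.Tendsto (fun n : ℕ => (L₀ + L₁ * g 0) * r * ((1 - L₁ * r / n)⁻¹)^n)
      Filter.atTop (nhds ((L₀ + L₁ * g 0) * r * Real.exp (L₁ * r))) := by
    apply Filter.Tendsto.const_mul
    have h1 := Real.tendsto_one_add_div_pow_exp (-(L₁ * r))
    have h2 : Filter.Tendsto (fun n : ℕ => (1 - L₁ * r / n)^n) Filter.atTop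
        (nhds (Real.exp (-(L₁ * r)))) := by
      apply h1.congr
      intro n
      rw [neg_div, ← sub_eq_add_neg]
    have h3 := h2.inv₀ (by positivity : Real.exp (-(L₁ * r)) ≠ 0)
    rw [← Real.exp_neg, neg_neg] at h3
    apply h3.congr
    intro n
    rw [inv_pow]
  have hev : ∀ᶠ n : ℕ in Filter.atTop,
      dualNorm N (gradient f (z 1) - gradient f (z 0)) ≤
        (L₀ + L₁ * g 0) * r * ((1 - L₁ * r / n)⁻¹)^n := by
    filter_upwards [Filter.eventually_ge_atTop (max 1 ⌈2 * (L₁ * r)⌉₊)] with n hn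
    have hn1 : 1 ≤ n := le_trans (le_max_left _ _) hn
    have hceil : ⌈2 * (L₁ * r)⌉₊ ≤ n := le_trans (le_max_right _ _) hn
    have h2n : 2 * (L₁ * r) ≤ (n:ℝ) := le_trans (Nat.le_ceil _) (by exact_mod_cast hceil)
    have hnpos : (0:ℝ) < n := by exact_mod_cast hn1
    have hsm : L₁ * r / n ≤ 1/2 := by rw [div_le_iff₀ hnpos]; linarith
    exact MAIN n hn1 hsm
  have hfinal := ge_of_tendsto hlim hev
  have hg0y : g 0 = dualNorm N (gradient f y) := by rw [hg]; simp [hz]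
  rw [hz1, hz0, hg0y] at hfinal
  calc dualNorm N (gradient f x - gradient f y)
      ≤ (L₀ + L₁ * dualNorm N (gradient f y)) * r * Real.exp (L₁ * r) := hfinal
    _ = (L₀ + L₁ * dualNorm N (gradient f y)) * Real.exp (L₁ * r) * r := by ring
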